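/- If G is a finitely generated centerless group, then the automorphism tower of G stabilizes at a countable stage: τ_G < ℵ₁. -/

import Mathlib

universe u

/-- The automorphism tower of a centerless group `G`: an ordinal-indexed increasing
continuous chain of groups, starting at `G`, where each successor stage is (identified
with) the automorphism group of the previous stage via the conjugation embedding. -/
structure AutTower (G : Type u) [Group G] where
  /-- the `o`-th stage `G^o` of the tower -/
  Stage : Ordinal.{u} → GrpCat.{u}
  /-- the inclusion maps of the tower -/
  map : ∀ ⦃o₁ o₂ : Ordinal.{u}⦄, o₁ ≤ o₂ → (↥(Stage o₁) →* ↥(Stage o₂))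
  map_id : ∀ (o : Ordinal.{u}) (x : ↥(Stage o)), map le_rfl x = x
  map_comp : ∀ ⦃o₁ o₂ o₃ : Ordinal.{u}⦄ (h₁ : o₁ ≤ o₂) (h₂ : o₂ ≤ o₃) (x : ↥(Stage o₁)),
      map h₂ (map h₁ x) = map (h₁.trans h₂) x
  map_injective : ∀ ⦃o₁ o₂ : Ordinal.{u}⦄ (h : o₁ ≤ o₂), Function.Injective (map h)
  /-- the identification of `G` with the `0`-th stage -/
  emb0 : G ≃* ↥(Stage 0)
  /-- the identification of the `(o+1)`-st stage with `Aut(G^o)` -/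
  succIso : ∀ o : Ordinal.{u}, ↥(Stage (o + 1)) ≃* MulAut ↥(Stage o)
  /-- under the above identification, the inclusion `G^o ≤ G^{o+1}` is `g ↦` conjugation by `g` -/
  succIso_map : ∀ (o : Ordinal.{u}) (x : ↥(Stage o)),
      succIso o (map (le_self_add (a := o) (b := 1)) x) = MulAut.conj x
  /-- at limit stages the tower is continuous: `G^δ = ⋃_{α<δ} G^α` -/
  limit_covers : ∀ (o : Ordinal.{u}), Order.IsSuccLimit o → ∀ x : ↥(Stage o),
      ∃ (o' : Ordinal.{u}) (h : o' < o), x ∈ Set.range (map h.le)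

namespace AutTower

variable {G : Type u} [Group G]

/-- the embedding of `G` into the `o`-th stage of its automorphism tower -/
def embed (T : AutTower G) (o : Ordinal.{u}) : G →* ↥(T.Stage o) :=
  (T.map (zero_le (a := o))).comp T.emb0.toMonoidHom

/-- `G^{o+1} = G^o`, i.e. the inclusion of stage `o` into stage `o+1` is onto -/
def StabilizesAt (T : AutTower G) (o : Ordinal.{u}) : Prop :=
  Function.Surjective (T.map (le_self_add (a := o) (b := 1)))

end AutTower

/-!
The centralizer of `G` in every stage `G^α` is trivial: at a successor stage an automorphism
of `G^α` commuting with the inner automorphisms induced by `G` fixes `G`, and then, by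
induction on `β ≤ α`, fixes each `G^β`, because `G^β` normalizes `G^{β'}` for `β = β' + 1`.
Hence an element of `G^α` is determined by how it conjugates a finite generating set `S`,
so `G^{α+1}` embeds into `(G^α)^S` and every stage below `ω₁` is countable.

In `G^{ω₁}` each element lies in some `G^ρ`, `ρ < ω₁`. For `β < ω₁` only countably many
elements conjugate `S` into `G^β`, so their ranks `ρ` are bounded by some `h β < ω₁`. A limit
`γ < ω₁` with `h β ≤ γ` for all `β < γ` is a stabilization point: an element of `G^{γ+1}`
conjugates the finite set `S` into `G^γ = ⋃_{β<γ} G^β`, hence into some `G^β` with `β < γ`,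
so it already lies in `G^γ`.
-/

open Cardinal Ordinal Order

theorem MulAut.mul_conj_mul_inv {K : Type*} [Group K] (τ : MulAut K) (y : K) :
    τ * conj y * τ⁻¹ = conj (τ y) := by
  ext z
  simp [MulAut.mul_apply, MulAut.inv_apply]

theorem Subgroup.eq_of_forall_conj_eq {K : Type*} [Group K] {S : Set K}
    (hS : centralizer S = ⊥) {a b : K} (h : ∀ s ∈ S, a * s * a⁻¹ = b * s * b⁻¹) : a = b := by
  have hmem : b⁻¹ * a ∈ centralizer S := by
    refine mem_centralizer_iff.2 fun s hs => ?_
    calc s * (b⁻¹ * a) = b⁻¹ * (b * s * b⁻¹) * a := by group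
      _ = b⁻¹ * (a * s * a⁻¹) * a := by rw [h s hs]
      _ = b⁻¹ * a * s := by group
  rw [hS, mem_bot, inv_mul_eq_one] at hmem
  exact hmem.symm

theorem MulAut.apply_eq_self_of_conj_mem {K : Type*} [Group K] {L : Set K}
    (hL : Subgroup.centralizer L = ⊥) {σ : MulAut K} (hσ : ∀ y ∈ L, σ y = y) {x : K}
    (hx : ∀ y ∈ L, x * y * x⁻¹ ∈ L) : σ x = x :=
  Subgroup.eq_of_forall_conj_eq hL fun y hy =>
    calc σ x * y * (σ x)⁻¹ = σ (x * y * x⁻¹) := by rw [map_mul, map_mul, map_inv, hσ y hy]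
      _ = x * y * x⁻¹ := hσ _ (hx y hy)

theorem MulAut.apply_eq_self_of_commute_conj {K : Type*} [Group K]
    (hK : Subgroup.center K = ⊥) {σ : MulAut K} {y : K} (h : Commute σ (conj y)) : σ y = y := by
  have hconj : conj (σ y) = conj y := by
    rw [← mul_conj_mul_inv, h.eq, mul_inv_cancel_right]
  refine Subgroup.eq_of_forall_conj_eq (S := Set.univ) (by rwa [Subgroup.centralizer_univ])
    fun z _ => ?_
  simpa only [conj_apply] using DFunLike.congr_fun hconj z

theorem countable_of_closure_eq_top {K : Type*} [Group K] {S : Set K} [Countable S]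
    (hS : Subgroup.closure S = ⊤) : Countable K :=
  (FreeGroup.lift_surjective_iff_closure_range_eq_top.2
    (by rwa [Subtype.range_coe] : Subgroup.closure (Set.range ((↑) : S → K)) = ⊤)).countable

theorem Ordinal.countable_Iio_of_lt_omega_one {o : Ordinal.{u}} (ho : o < ω₁) :
    Countable (Set.Iio o) := by
  rwa [← mk_le_aleph0_iff, Cardinal.mk_Iio_ordinal, lift_le_aleph0, ← lt_aleph_one_iff, ← lt_ord,
    ord_aleph]

theorem Ordinal.exists_isSuccLimit_lt_omega_one {h : Ordinal.{u} → Ordinal.{u}}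
    (hmono : MonotoneOn h (Set.Iio ω₁)) (hlt : ∀ β < ω₁, h β < ω₁) :
    ∃ γ < ω₁, IsSuccLimit γ ∧ ∀ β < γ, h β ≤ γ := by
  set f : Ordinal → Ordinal := fun β => max (h β) (β + 1)
  have lt_f (β) : β < f β := (lt_add_one_iff.2 le_rfl).trans_le (le_max_right _ _)
  have hfω (β) (hβ : β < ω₁) : f β < ω₁ :=
    max_lt (hlt β hβ) ((isSuccLimit_omega 1).add_one_lt hβ)
  have hγω : nfp f 0 < ω₁ := by
    simpa only [ord_aleph] using nfp_lt_ord_of_isRegular isRegular_aleph_one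
      aleph0_lt_aleph_one.ne' (by simpa only [ord_aleph] using hfω)
      (by simpa only [ord_aleph] using omega_pos 1)
  have hclosed (β) (hβ : β < nfp f 0) : ∃ δ, β < δ ∧ δ < ω₁ ∧ f δ ≤ nfp f 0 := by
    obtain ⟨n, hn⟩ := lt_nfp_iff.1 hβ
    refine ⟨f^[n] 0, hn, (iterate_le_nfp f 0 n).trans_lt hγω, ?_⟩
    rw [← Function.iterate_succ_apply' f n 0]
    exact iterate_le_nfp f 0 (n + 1)
  refine ⟨nfp f 0, hγω, isSuccLimit_iff.2 ⟨((lt_f 0).trans_le (iterate_le_nfp f 0 1)).ne', ?_⟩,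
    fun β hβ => ?_⟩
  · refine isSuccPrelimit_of_succ_lt fun β hβ => ?_
    obtain ⟨δ, hβδ, -, hδ⟩ := hclosed β hβ
    exact (succ_le_of_lt hβδ).trans_lt ((lt_f δ).trans_le hδ)
  · obtain ⟨δ, hβδ, hδω, hδ⟩ := hclosed β hβ
    exact (hmono (hβδ.trans hδω) hδω hβδ.le).trans ((le_max_left _ _).trans hδ)

namespace AutTower

variable {G : Type u} [Group G] (T : AutTower G)

theorem map_embed {o₁ o₂ : Ordinal.{u}} (h : o₁ ≤ o₂) (g : G) :
    T.map h (T.embed o₁ g) = T.embed o₂ g :=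
  T.map_comp (zero_le (a := o₁)) h (T.emb0 g)

theorem range_map_subset_range_map {β β' o : Ordinal.{u}} (hβ : β ≤ β') (hβ' : β' ≤ o) :
    Set.range (T.map (hβ.trans hβ')) ⊆ Set.range (T.map hβ') := by
  rintro _ ⟨y, rfl⟩
  exact ⟨T.map hβ y, T.map_comp _ _ _⟩

theorem range_embed_subset_range_map {β o : Ordinal.{u}} (h : β ≤ o) :
    Set.range (T.embed o) ⊆ Set.range (T.map h) := by
  rintro _ ⟨g, rfl⟩
  exact ⟨T.embed β g, T.map_embed h g⟩

theorem mul_map_mul_inv_succ {r : Ordinal.{u}} (x : T.Stage (r + 1)) (y : T.Stage r) :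
    x * T.map (le_self_add : r ≤ r + 1) y * x⁻¹ = T.map le_self_add (T.succIso r x y) := by
  apply (T.succIso r).injective
  simp only [map_mul, map_inv, T.succIso_map]
  exact MulAut.mul_conj_mul_inv _ _

theorem map_mul_map_mul_inv {r o : Ordinal.{u}} (h : r + 1 ≤ o) (x : T.Stage (r + 1))
    (y : T.Stage r) :
    T.map h x * T.map (le_self_add.trans h) y * (T.map h x)⁻¹
      = T.map (le_self_add.trans h) (T.succIso r x y) := by
  rw [← T.map_comp le_self_add h, ← T.map_comp le_self_add h, ← map_inv, ← map_mul, ← map_mul,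
    T.mul_map_mul_inv_succ]

theorem centralizer_range_embed_zero (hG : Subgroup.center G = ⊥) :
    Subgroup.centralizer (Set.range (T.embed 0)) = ⊥ := by
  have hembed (g : G) : T.embed 0 g = T.emb0 g := T.map_id 0 (T.emb0 g)
  refine (Subgroup.eq_bot_iff_forall _).2 fun c hc => ?_
  have hcenter : T.emb0.symm c ∈ Subgroup.center G := by
    refine Subgroup.mem_center_iff.2 fun g => T.emb0.injective ?_
    simpa only [map_mul, MulEquiv.apply_symm_apply, hembed] using
      Subgroup.mem_centralizer_iff.1 hc (T.embed 0 g) ⟨g, rfl⟩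
  rw [hG, Subgroup.mem_bot, MulEquiv.symm_apply_eq, map_one] at hcenter
  exact hcenter

theorem succIso_apply_map_eq_self {p : Ordinal.{u}}
    (hp : Subgroup.centralizer (Set.range (T.embed p)) = ⊥) {c : T.Stage (p + 1)}
    (hc : c ∈ Subgroup.centralizer (Set.range (T.embed (p + 1)))) :
    ∀ q (hq : q ≤ p) (x : T.Stage q), T.succIso p c (T.map hq x) = T.map hq x := by
  intro q
  induction q using Ordinal.limitRecOn with
  | zero =>
    intro hq x
    obtain ⟨g, rfl⟩ := T.emb0.surjective x
    change T.succIso p c (T.embed p g) = T.embed p g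
    refine MulAut.apply_eq_self_of_commute_conj
      (le_bot_iff.1 (hp ▸ Subgroup.center_le_centralizer _)) ?_
    have hcomm := Subgroup.mem_centralizer_iff.1 hc (T.embed (p + 1) g) ⟨g, rfl⟩
    rw [← T.map_embed (le_self_add : p ≤ p + 1)] at hcomm
    simpa only [commute_iff_eq, map_mul, T.succIso_map] using (congrArg (T.succIso p) hcomm).symm
  | add_one r ih =>
    intro hq x
    have hr : r ≤ p := le_self_add.trans hq
    refine MulAut.apply_eq_self_of_conj_mem (L := Set.range (T.map hr))
      (le_bot_iff.1 (hp ▸ Subgroup.centralizer_le (T.range_embed_subset_range_map hr)))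
      (by rintro _ ⟨y, rfl⟩; exact ih hr y) ?_
    rintro _ ⟨y, rfl⟩
    exact ⟨T.succIso r x y, (T.map_mul_map_mul_inv hq x y).symm⟩
  | limit q hq ih =>
    intro hqp x
    obtain ⟨q', hq', y, rfl⟩ := T.limit_covers q hq x
    rw [T.map_comp]
    exact ih q' hq' _ y

theorem centralizer_range_embed_succ {p : Ordinal.{u}}
    (hp : Subgroup.centralizer (Set.range (T.embed p)) = ⊥) :
    Subgroup.centralizer (Set.range (T.embed (p + 1))) = ⊥ := by
  refine (Subgroup.eq_bot_iff_forall _).2 fun c hc => (T.succIso p).injective ?_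
  rw [map_one]
  ext y
  simpa only [T.map_id, MulAut.one_apply] using T.succIso_apply_map_eq_self hp hc p le_rfl y

theorem centralizer_range_embed_of_isSuccLimit {o : Ordinal.{u}} (ho : IsSuccLimit o)
    (ih : ∀ o' < o, Subgroup.centralizer (Set.range (T.embed o')) = ⊥) :
    Subgroup.centralizer (Set.range (T.embed o)) = ⊥ := by
  refine (Subgroup.eq_bot_iff_forall _).2 fun c hc => ?_
  obtain ⟨o', ho', b, rfl⟩ := T.limit_covers o ho c
  have hb : b ∈ Subgroup.centralizer (Set.range (T.embed o')) := by
    refine Subgroup.mem_centralizer_iff.2 ?_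
    rintro _ ⟨g, rfl⟩
    apply T.map_injective ho'.le
    simpa only [map_mul, T.map_embed] using
      Subgroup.mem_centralizer_iff.1 hc (T.embed o g) ⟨g, rfl⟩
  rw [ih o' ho', Subgroup.mem_bot] at hb
  rw [hb, map_one]

theorem centralizer_range_embed (hG : Subgroup.center G = ⊥) (o : Ordinal.{u}) :
    Subgroup.centralizer (Set.range (T.embed o)) = ⊥ := by
  induction o using Ordinal.limitRecOn with
  | zero => exact T.centralizer_range_embed_zero hG
  | add_one p ih => exact T.centralizer_range_embed_succ ih
  | limit o ho ih => exact T.centralizer_range_embed_of_isSuccLimit ho ih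

theorem eq_of_forall_conj_embed_eq (hG : Subgroup.center G = ⊥) {S : Set G}
    (hS : Subgroup.closure S = ⊤) {o : Ordinal.{u}} {a b : T.Stage o}
    (h : ∀ s ∈ S, a * T.embed o s * a⁻¹ = b * T.embed o s * b⁻¹) : a = b := by
  refine Subgroup.eq_of_forall_conj_eq (S := T.embed o '' S) ?_
    (by rintro _ ⟨s, hs, rfl⟩; exact h s hs)
  rw [← Subgroup.centralizer_closure, ← MonoidHom.map_closure, hS, ← MonoidHom.range_eq_map,
    MonoidHom.coe_range]
  exact T.centralizer_range_embed hG o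

theorem countable_stage_succ (hG : Subgroup.center G = ⊥) {S : Finset G}
    (hS : Subgroup.closure (S : Set G) = ⊤) {p : Ordinal.{u}} [Countable (T.Stage p)] :
    Countable (T.Stage (p + 1)) := by
  refine Function.Injective.countable
    (f := fun σ (s : S) => T.succIso p σ (T.embed p s)) fun σ τ hστ => ?_
  refine T.eq_of_forall_conj_embed_eq hG hS fun s hs => ?_
  rw [← T.map_embed (le_self_add : p ≤ p + 1), T.mul_map_mul_inv_succ, T.mul_map_mul_inv_succ]
  exact congrArg _ (congrFun hστ ⟨s, hs⟩)

theorem countable_stage_of_isSuccLimit {o : Ordinal.{u}} (ho : IsSuccLimit o)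
    [Countable (Set.Iio o)] (h : ∀ o' < o, Countable (T.Stage o')) : Countable (T.Stage o) := by
  have (β : Set.Iio o) : Countable (T.Stage β) := h β β.2
  refine Function.Surjective.countable
    (f := fun x : Σ β : Set.Iio o, T.Stage β => T.map (le_of_lt x.1.2) x.2) fun x => ?_
  obtain ⟨o', ho', y, hy⟩ := T.limit_covers o ho x
  exact ⟨⟨⟨o', ho'⟩, y⟩, hy⟩

theorem countable_stage (hG : Subgroup.center G = ⊥) {S : Finset G}
    (hS : Subgroup.closure (S : Set G) = ⊤) {o : Ordinal.{u}} (ho : o < ω₁) :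
    Countable (T.Stage o) := by
  induction o using Ordinal.limitRecOn with
  | zero =>
    have : Countable G := countable_of_closure_eq_top hS
    exact Countable.of_equiv G T.emb0.toEquiv
  | add_one p ih =>
    have := ih (le_self_add.trans_lt ho)
    exact T.countable_stage_succ hG hS
  | limit o hlim ih =>
    have := countable_Iio_of_lt_omega_one ho
    exact T.countable_stage_of_isSuccLimit hlim fun o' ho' => ih o' ho' (ho'.trans ho)

def conjugatorsInto (S : Set G) (β o : Ordinal.{u}) : Set (T.Stage o) :=
  {a | ∃ hβ : β ≤ o, ∀ s ∈ S, a * T.embed o s * a⁻¹ ∈ Set.range (T.map hβ)}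

theorem conjugatorsInto_mono {S : Set G} {β β' o : Ordinal.{u}} (hβ : β ≤ β') (hβ' : β' ≤ o) :
    T.conjugatorsInto S β o ⊆ T.conjugatorsInto S β' o := by
  rintro a ⟨_, ha⟩
  exact ⟨hβ', fun s hs => T.range_map_subset_range_map hβ hβ' (ha s hs)⟩

theorem countable_conjugatorsInto (hG : Subgroup.center G = ⊥) {S : Finset G}
    (hS : Subgroup.closure (S : Set G) = ⊤) {β o : Ordinal.{u}} (hβ : β < ω₁) :
    (T.conjugatorsInto S β o).Countable := by
  rcases (T.conjugatorsInto S β o).eq_empty_or_nonempty with hempty | ⟨_, hβo, -⟩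
  · exact hempty ▸ Set.countable_empty
  have := T.countable_stage hG hS hβ
  refine Set.MapsTo.countable_of_injOn (f := fun a (s : S) => a * T.embed o s * a⁻¹)
    (t := Set.range fun (c : S → T.Stage β) (s : S) => T.map hβo (c s)) ?_ ?_
    (Set.countable_range _)
  · rintro a ⟨_, ha⟩
    exact ⟨fun s => (ha s s.2).choose, funext fun s => (ha s s.2).choose_spec⟩
  · exact fun a _ b _ hab => T.eq_of_forall_conj_embed_eq hG hS fun s hs => congrFun hab ⟨s, hs⟩

theorem exists_lt_map_mem_conjugatorsInto {S : Finset G} {γ o : Ordinal.{u}}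
    (hγ : IsSuccLimit γ) (h : γ + 1 ≤ o) (σ : T.Stage (γ + 1)) :
    ∃ β < γ, T.map h σ ∈ T.conjugatorsInto S β o := by
  have hγo : γ ≤ o := le_self_add.trans h
  have hconj (s : S) : ∃ β < γ, ∃ hβ : β ≤ o,
      T.map h σ * T.embed o s * (T.map h σ)⁻¹ ∈ Set.range (T.map hβ) := by
    obtain ⟨β, hβ, y, hy⟩ := T.limit_covers γ hγ (T.succIso γ σ (T.embed γ s))
    refine ⟨β, hβ, hβ.le.trans hγo, y, ?_⟩
    rw [← T.map_embed hγo, T.map_mul_map_mul_inv h, ← hy, T.map_comp]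
  choose β hβγ hβo hβ using hconj
  refine ⟨Finset.univ.sup β, (Finset.sup_lt_iff hγ.bot_lt).2 fun s _ => hβγ s,
    Finset.sup_le fun s _ => hβo s, fun s hs => ?_⟩
  exact T.range_map_subset_range_map (Finset.le_sup (Finset.mem_univ ⟨s, hs⟩)) _ (hβ ⟨s, hs⟩)

theorem stabilizesAt_of_map_mem_range {γ o : Ordinal.{u}} (h : γ + 1 ≤ o)
    (hσ : ∀ σ : T.Stage (γ + 1), T.map h σ ∈ Set.range (T.map (le_self_add.trans h))) :
    T.StabilizesAt γ := by
  intro σ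
  obtain ⟨x, hx⟩ := hσ σ
  exact ⟨x, T.map_injective h (by rwa [T.map_comp])⟩

theorem exists_stabilizesAt_lt_omega_one (hG : Subgroup.center G = ⊥) {S : Finset G}
    (hS : Subgroup.closure (S : Set G) = ⊤) : ∃ γ < ω₁, T.StabilizesAt γ := by
  have hω₁ : IsSuccLimit ω₁ := isSuccLimit_omega 1
  choose rank hrank hmem using T.limit_covers ω₁ hω₁
  set bound : Ordinal.{u} → Ordinal.{u} :=
    fun β => ⨆ a : T.conjugatorsInto S β ω₁, rank a + 1
  have le_bound {β a} (ha : a ∈ T.conjugatorsInto S β ω₁) : rank a + 1 ≤ bound β :=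
    Ordinal.le_iSup (fun a : T.conjugatorsInto S β ω₁ => rank a + 1) ⟨a, ha⟩
  have hmono : MonotoneOn bound (Set.Iio ω₁) := fun β _ β' hβ' hββ' =>
    Ordinal.iSup_le fun a => le_bound (T.conjugatorsInto_mono hββ' (le_of_lt hβ') a.2)
  have hlt (β) (hβ : β < ω₁) : bound β < ω₁ :=
    have := (T.countable_conjugatorsInto hG hS (o := ω₁) hβ).to_subtype
    Ordinal.iSup_lt_omega_one fun a => hω₁.add_one_lt (hrank a)
  obtain ⟨γ, hγω, hγ, hclosed⟩ := exists_isSuccLimit_lt_omega_one hmono hlt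
  have hγ1 : γ + 1 ≤ ω₁ := (hω₁.add_one_lt hγω).le
  refine ⟨γ, hγω, T.stabilizesAt_of_map_mem_range hγ1 fun σ => ?_⟩
  obtain ⟨β, hβγ, hσ⟩ := T.exists_lt_map_mem_conjugatorsInto (S := S) hγ hγ1 σ
  have hrank_lt : rank (T.map hγ1 σ) < γ :=
    add_one_le_iff.1 ((le_bound hσ).trans (hclosed β hβγ))
  exact T.range_map_subset_range_map hrank_lt.le (le_self_add.trans hγ1) (hmem _)

end AutTower

/-- If `G` is a finitely generated centerless group, then the automorphism tower of
`G` stabilizes at a countable stage: `τ_G < ℵ₁`. -/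
theorem autTower_stabilizes_countable_of_fg {G : Type u} [Group G]
    (hfg : Group.FG G) (hG : Subgroup.center G = ⊥) (T : AutTower G) :
    ∃ α : Ordinal.{u}, α < (Cardinal.aleph 1).ord ∧ T.StabilizesAt α := by
  obtain ⟨S, hS⟩ := hfg.out
  rw [Cardinal.ord_aleph]
  exact T.exists_stabilizesAt_lt_omega_one hG hS
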